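/- Let M be a graded module over A = Z[c,X]/(X²). Define Δ_M: M → A⊗_R M by Δ_M(t) = X⊗t + 1⊗Xt + cX⊗Xt, m_M: A⊗_R M → M by m_M(1⊗t)=t, m_M(X⊗t)=Xt, and ι_M(t)=1⊗t. Then A⊗_R M = Δ_M(M) ⊕ ι_M(M) as A-modules. -/

import Mathlib

open TensorProduct

noncomputable section

abbrev R : Type := Polynomial ℤ
abbrev A : Type := R × R

/-- The `R`-linear map out of `A = R·1 ⊕ R·X` sending `1 ↦ p` and `X ↦ q`. -/
def lmap {P : Type*} [AddCommGroup P] [Module R P] (p q : P) : A →ₗ[R] P :=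
  (LinearMap.toSpanSingleton R P p).coprod (LinearMap.toSpanSingleton R P q)

/-- The basis element `1` of `A`. -/
def one' : A := (1, 0)

/-- The basis element `X` of `A`. -/
def Xa : A := (0, 1)

/-- Multiplication `m : A ⊗ A → A`, with `1·1 = 1`, `1·X = X·1 = X`, `X² = 0`. -/
def mul : A ⊗[R] A →ₗ[R] A :=
  TensorProduct.lift (lmap LinearMap.id (lmap Xa 0))

/-- Comultiplication `Δ(1) = 1⊗X + X⊗1 + c X⊗X`, `Δ(X) = X⊗X`. -/
def Δ : A →ₗ[R] A ⊗[R] A :=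
  lmap (one' ⊗ₜ[R] Xa + Xa ⊗ₜ[R] one' + (Polynomial.X : R) • (Xa ⊗ₜ[R] Xa)) (Xa ⊗ₜ[R] Xa)

/-- Counit `ε(1) = -c`, `ε(X) = 1`. -/
def ε : A →ₗ[R] R := lmap (-Polynomial.X) 1

/-- `Δ_M : M → A ⊗ M`, `t ↦ X⊗t + 1⊗Xt + cX⊗Xt`. -/
def ΔM (M : Type*) [AddCommGroup M] [Module R M] (XM : M →ₗ[R] M) :
    M →ₗ[R] A ⊗[R] M :=
  TensorProduct.mk R A M Xa + (TensorProduct.mk R A M one') ∘ₗ XM +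
    (Polynomial.X : R) • ((TensorProduct.mk R A M Xa) ∘ₗ XM)

/-- `m_M : A ⊗ M → M`, `1⊗t ↦ t`, `X⊗t ↦ Xt`. -/
def mM (M : Type*) [AddCommGroup M] [Module R M] (XM : M →ₗ[R] M) :
    A ⊗[R] M →ₗ[R] M :=
  TensorProduct.lift (lmap LinearMap.id XM)

/-- `ι_M : M → A ⊗ M`, `t ↦ 1⊗t`. -/
def ιM (M : Type*) [AddCommGroup M] [Module R M] : M →ₗ[R] A ⊗[R] M :=
  TensorProduct.mk R A M one'

/-- The action of `X ∈ A` on `A ⊗ M`, namely `Id_A ⊗ X_M` (since `a(x⊗y) = x⊗(ay)`). -/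
def XT (M : Type*) [AddCommGroup M] [Module R M] (XM : M →ₗ[R] M) :
    A ⊗[R] M →ₗ[R] A ⊗[R] M :=
  TensorProduct.map LinearMap.id XM

/-!
Projecting `A ⊗ M = (1 ⊗ M) ⊕ (X ⊗ M)` onto its `X`-component kills `ι_M(M)` and turns `Δ_M`
into `1 + c X_M`, which is invertible because `X_M² = 0`; hence `Δ_M(M) ∩ ι_M(M) = 0`.
Conversely `1 ⊗ m = ι_M(m)` and `X ⊗ m = Δ_M(m - c X m) - ι_M(X m)`, so the two ranges span.
Both `Δ_M` and `ι_M` intertwine `X_M` with `Id_A ⊗ X_M`, so their ranges are `A`-submodules.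
-/

theorem LinearMap.map_range_le_range_of_comp_eq {S M N : Type*} [Semiring S]
    [AddCommMonoid M] [AddCommMonoid N] [Module S M] [Module S N]
    {f : N →ₗ[S] N} {g : M →ₗ[S] N} {h : M →ₗ[S] M} (hc : f ∘ₗ g = g ∘ₗ h) :
    (LinearMap.range g).map f ≤ LinearMap.range g := by
  rw [← LinearMap.range_comp, hc]
  exact LinearMap.range_comp_le_range _ _

theorem LinearMap.isUnit_one_add_smul_of_comp_self_eq_zero {S M : Type*} [CommRing S]
    [AddCommGroup M] [Module S M] {f : Module.End S M} (hf : f ∘ₗ f = 0) (r : S) :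
    IsUnit (1 + r • f) := by
  refine IsNilpotent.isUnit_one_add ⟨2, ?_⟩
  rw [pow_two, smul_mul_smul_comm, Module.End.mul_eq_comp, hf, smul_zero]

@[simp]
lemma lmap_one' {P : Type*} [AddCommGroup P] [Module R P] (p q : P) : lmap p q one' = p := by
  simp [lmap, one']

@[simp]
lemma lmap_Xa {P : Type*} [AddCommGroup P] [Module R P] (p q : P) : lmap p q Xa = q := by
  simp [lmap, Xa]

lemma eq_smul_one'_add_smul_Xa (a : A) : a = a.1 • one' + a.2 • Xa := by
  simp [one', Xa]

section

variable {M : Type*} [AddCommGroup M] [Module R M] (XM : M →ₗ[R] M)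

def xCoord (M : Type*) [AddCommGroup M] [Module R M] : A ⊗[R] M →ₗ[R] M :=
  TensorProduct.lift (lmap 0 LinearMap.id)

@[simp]
lemma xCoord_one'_tmul (m : M) : xCoord M (one' ⊗ₜ[R] m) = 0 := by
  simp [xCoord]

@[simp]
lemma xCoord_Xa_tmul (m : M) : xCoord M (Xa ⊗ₜ[R] m) = m := by
  simp [xCoord]

lemma ΔM_apply (t : M) :
    ΔM M XM t = Xa ⊗ₜ[R] t + one' ⊗ₜ[R] XM t + (Polynomial.X : R) • (Xa ⊗ₜ[R] XM t) :=
  rfl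

lemma xCoord_comp_ιM : xCoord M ∘ₗ ιM M = 0 := by
  ext m
  simp [ιM]

lemma xCoord_comp_ΔM : xCoord M ∘ₗ ΔM M XM = 1 + (Polynomial.X : R) • XM := by
  ext t
  simp [ΔM_apply]

lemma disjoint_range_ΔM_range_ιM (hX : XM ∘ₗ XM = 0) :
    Disjoint (LinearMap.range (ΔM M XM)) (LinearMap.range (ιM M)) := by
  rw [Submodule.disjoint_def]
  rintro _ ⟨t, rfl⟩ ⟨s, hs⟩
  have hinj : Function.Injective (1 + (Polynomial.X : R) • XM : Module.End R M) :=
    ((Module.End.isUnit_iff _).mp (LinearMap.isUnit_one_add_smul_of_comp_self_eq_zero hX _)).injective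
  have ht : (1 + (Polynomial.X : R) • XM : Module.End R M) t = 0 := by
    rw [← xCoord_comp_ΔM, LinearMap.comp_apply, ← hs, ← LinearMap.comp_apply, xCoord_comp_ιM,
      LinearMap.zero_apply]
  rw [(injective_iff_map_eq_zero _).mp hinj t ht, map_zero]

lemma Xa_tmul_eq (hX : XM ∘ₗ XM = 0) (m : M) :
    Xa ⊗ₜ[R] m = ΔM M XM (m - (Polynomial.X : R) • XM m) - ιM M (XM m) := by
  have hXX : XM (XM m) = 0 := LinearMap.congr_fun hX m
  simp only [ΔM_apply, ιM, TensorProduct.mk_apply, map_sub, map_smul, hXX, smul_zero, tmul_zero,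
    add_zero]
  module

lemma codisjoint_range_ΔM_range_ιM (hX : XM ∘ₗ XM = 0) :
    Codisjoint (LinearMap.range (ΔM M XM)) (LinearMap.range (ιM M)) := by
  rw [codisjoint_iff, eq_top_iff, ← TensorProduct.span_tmul_eq_top, Submodule.span_le]
  rintro _ ⟨a, m, rfl⟩
  have h1 : one' ⊗ₜ[R] m ∈ LinearMap.range (ΔM M XM) ⊔ LinearMap.range (ιM M) :=
    Submodule.mem_sup_right ⟨m, rfl⟩
  have hXa : Xa ⊗ₜ[R] m ∈ LinearMap.range (ΔM M XM) ⊔ LinearMap.range (ιM M) := by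
    rw [Xa_tmul_eq XM hX]
    exact Submodule.sub_mem _ (Submodule.mem_sup_left ⟨_, rfl⟩) (Submodule.mem_sup_right ⟨_, rfl⟩)
  rw [eq_smul_one'_add_smul_Xa a, add_tmul, ← smul_tmul', ← smul_tmul']
  exact Submodule.add_mem _ (Submodule.smul_mem _ _ h1) (Submodule.smul_mem _ _ hXa)

lemma XT_comp_ΔM : XT M XM ∘ₗ ΔM M XM = ΔM M XM ∘ₗ XM := by
  ext t
  simp [XT, ΔM_apply]

lemma XT_comp_ιM : XT M XM ∘ₗ ιM M = ιM M ∘ₗ XM := by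
  ext t
  simp [XT, ιM]

end

/-- for a graded `A`-module `M` (an `R = ℤ[c]`-module with an `R`-linear
`X` satisfying `X² = 0`), `A ⊗_R M = Δ_M(M) ⊕ ι_M(M)` as `A`-modules: the two ranges are
complementary `R`-submodules, each stable under the `X`-action `a(x⊗y) = x⊗(ay)`. -/
theorem stmt11 (M : Type*) [AddCommGroup M] [Module R M]
    (XM : M →ₗ[R] M) (hX : XM ∘ₗ XM = 0) :
    IsCompl (LinearMap.range (ΔM M XM)) (LinearMap.range (ιM M)) ∧
    Submodule.map (XT M XM) (LinearMap.range (ΔM M XM)) ≤ LinearMap.range (ΔM M XM) ∧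
    Submodule.map (XT M XM) (LinearMap.range (ιM M)) ≤ LinearMap.range (ιM M) :=
  ⟨⟨disjoint_range_ΔM_range_ιM XM hX, codisjoint_range_ΔM_range_ιM XM hX⟩,
    LinearMap.map_range_le_range_of_comp_eq (XT_comp_ΔM XM),
    LinearMap.map_range_le_range_of_comp_eq (XT_comp_ιM XM)⟩
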